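/- Milnor's Lobachevsky function Л is continuous on ℝ and differentiable at every x that is not an integer multiple of π, with derivative Л'(x) = -log|2 sin x|. -/

import Mathlib

/-- Milnor's Lobachevsky function. -/
noncomputable def lob (x : ℝ) : ℝ := -∫ ξ in (0:ℝ)..x, Real.log |2 * Real.sin ξ|

open Real

theorem intervalIntegrable_log_abs_two_mul_sin (a b : ℝ) :
    IntervalIntegrable (fun ξ ↦ log |2 * sin ξ|) MeasureTheory.volume a b :=
  (analyticOnNhd_const.mul analyticOnNhd_sin).meromorphicOn.intervalIntegrable_log_norm

theorem continuous_lob : Continuous lob :=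
  (intervalIntegral.continuous_primitive intervalIntegrable_log_abs_two_mul_sin 0).neg

theorem hasDerivAt_lob {x : ℝ} (hx : sin x ≠ 0) :
    HasDerivAt lob (-log |2 * sin x|) x := by
  have hmeas : Measurable fun ξ ↦ log |2 * sin ξ| := by fun_prop
  have hcont : ContinuousAt (fun ξ ↦ log |2 * sin ξ|) x :=
    (continuous_const.mul continuous_sin).abs.continuousAt.log (by simpa using hx)
  unfold lob
  exact (intervalIntegral.integral_hasDerivAt_right
    (intervalIntegrable_log_abs_two_mul_sin 0 x)
    hmeas.stronglyMeasurable.stronglyMeasurableAtFilter hcont).neg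

/-- Milnor's Lobachevsky function is continuous on `ℝ` and differentiable away from
integer multiples of `π`, with derivative `-log |2 sin x|`. -/
theorem lob_continuous_and_differentiable :
    Continuous lob
    ∧ ∀ x : ℝ, (∀ n : ℤ, x ≠ n * Real.pi) →
        HasDerivAt lob (-(Real.log |2 * Real.sin x|)) x :=
  ⟨continuous_lob, fun x hx ↦ hasDerivAt_lob (sin_ne_zero_iff.2 fun n h ↦ hx n h.symm)⟩
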